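/- Let K be a number field, let X/K be a complete nonsingular curve of genus 0 or 1, let f : X → X be a morphism of degree d ≥ 2 defined over K, and let α ∈ X(K). Then dim_lower(G_{f,α}) = ((d−1)/log(d!))·liminf_{n→∞} log[K(f^{−n}(α)) : K]/d^n and dim_upper(G_{f,α}) = ((d−1)/log(d!))·limsup_{n→∞} log[K(f^{−n}(α)) : K]/d^n; in particular dim(G_{f,α}) equals ((d−1)/log(d!))·lim_{n→∞} log[K(f^{−n}(α)) : K]/d^n whenever this limit exists. -/

import Mathlib

open scoped Classical

noncomputable section

/-! ### Minkowski dimension machinery for groups of automorphisms of rooted trees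

A rooted tree is presented by its levels `V 0, V 1, V 2, …` (with `V 0` the root level)
together with parent maps `V (n+1) → V n`.  An automorphism is a family of permutations
of the levels commuting with the parent maps; it is in particular determined by a point of
`∀ k, Equiv.Perm (V k)`.  The restriction `r_n σ` of `σ` to the height-`n` subtree is the
tuple `(σ 0, …, σ n)`, and the natural metric is
`d(σ,τ) = inf { d!^{-(dⁿ-1)/(d-1)} : r_n σ = r_n τ }`. -/

/-- The exponent `(dⁿ - 1)/(d - 1) = 1 + d + ⋯ + d^(n-1)`. -/
def scaleExp (d n : ℕ) : ℕ := ∑ i ∈ Finset.range n, d ^ i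

/-- The scale `ε_n = d!^{-(dⁿ-1)/(d-1)}`, i.e. `1/|Aut(Tₙᶜᵒᵐ)|`. -/
def treeScale (d n : ℕ) : ℝ := ((d.factorial : ℝ) ^ scaleExp d n)⁻¹

/-- Two families of level permutations restrict to the same automorphism of the
height-`n` subtree. -/
def AgreeUpTo {V : ℕ → Type*} (n : ℕ) (σ τ : ∀ k, Equiv.Perm (V k)) : Prop :=
  ∀ k, k ≤ n → σ k = τ k

/-- The natural metric on automorphisms of a rooted `d`-ary tree:
`d(σ,τ) = inf { d!^{-(dⁿ-1)/(d-1)} : σ and τ agree on the height-n subtree }`. -/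
def treeDist {V : ℕ → Type*} (d : ℕ) (σ τ : ∀ k, Equiv.Perm (V k)) : ℝ :=
  sInf {x : ℝ | ∃ n : ℕ, AgreeUpTo n σ τ ∧ x = treeScale d n}

/-- `N_{ε_n}(G)`: the least number of balls of radius `ε_n = treeScale d n` needed to
cover `G`. -/
def coverNum {V : ℕ → Type*} (d : ℕ) (G : Set (∀ k, Equiv.Perm (V k))) (n : ℕ) : ℕ :=
  sInf {m : ℕ | ∃ s : Finset (∀ k, Equiv.Perm (V k)), s.card = m ∧
    G ⊆ ⋃ σ ∈ s, {τ | treeDist d σ τ ≤ treeScale d n}}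

/-- The lower Minkowski dimension `liminf_{ε → 0} log N_ε(G) / log (1/ε)` (computed
along the scales `ε_n` of the metric). -/
def dimLower {V : ℕ → Type*} (d : ℕ) (G : Set (∀ k, Equiv.Perm (V k))) : ℝ :=
  Filter.liminf
    (fun n : ℕ => Real.log (coverNum d G n : ℝ) / Real.log (1 / treeScale d n)) Filter.atTop

/-- The upper Minkowski dimension `limsup_{ε → 0} log N_ε(G) / log (1/ε)` (computed
along the scales `ε_n` of the metric). -/
def dimUpper {V : ℕ → Type*} (d : ℕ) (G : Set (∀ k, Equiv.Perm (V k))) : ℝ :=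
  Filter.limsup
    (fun n : ℕ => Real.log (coverNum d G n : ℝ) / Real.log (1 / treeScale d n)) Filter.atTop

/-- The Minkowski dimension of `G` exists and equals `x`. -/
def HasDim {V : ℕ → Type*} (d : ℕ) (G : Set (∀ k, Equiv.Perm (V k))) (x : ℝ) : Prop :=
  dimLower d G = x ∧ dimUpper d G = x

/-- `G` is closed for the natural metric. -/
def IsDistClosed {V : ℕ → Type*} (d : ℕ) (G : Set (∀ k, Equiv.Perm (V k))) : Prop :=
  ∀ σ, (∀ ε : ℝ, 0 < ε → ∃ τ ∈ G, treeDist d σ τ ≤ ε) → σ ∈ G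

/-- The closure of `G` for the natural metric. -/
def distClosure {V : ℕ → Type*} (d : ℕ) (G : Set (∀ k, Equiv.Perm (V k))) :
    Set (∀ k, Equiv.Perm (V k)) :=
  {σ | ∀ ε : ℝ, 0 < ε → ∃ τ ∈ G, treeDist d σ τ ≤ ε}

/-- `|r_n(G)|`: the cardinality of the restriction of `G` to the height-`n` subtree. -/
def levelCard {V : ℕ → Type*} (G : Set (∀ k, Equiv.Perm (V k))) (n : ℕ) : ℕ :=
  Nat.card ((fun (σ : ∀ k, Equiv.Perm (V k)) (k : Fin (n + 1)) => σ k.1) '' G)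

end
noncomputable section

/-- A fixed algebraic closure `K̄` of `K`. -/
abbrev Kbar (K : Type*) [Field K] : Type _ := AlgebraicClosure K

/-- The level-`n` vertices of the preimage tree of `α` under `φ`: the set
`φ^{-n}(α)`. -/
abbrev preV {Pts : Type*} (φ : Pts → Pts) (α : Pts) (n : ℕ) : Type _ :=
  {β : Pts // φ^[n] β = α}

/-- The parent map of the preimage tree: a vertex `β ∈ φ^{-(n+1)}(α)` is joined to
`φ(β) ∈ φ^{-n}(α)`. -/
def preParent {Pts : Type*} (φ : Pts → Pts) (α : Pts) (n : ℕ)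
    (β : preV φ α (n + 1)) : preV φ α n :=
  ⟨φ β.1, by have h := β.2; rwa [Function.iterate_succ_apply] at h⟩

/-- The image `G_{φ,α}` of the arboreal Galois representation attached to `(φ, α)` over
the base field `L` (an intermediate field of `K̄/K`): the set of families of level
permutations of the preimage tree induced by elements of `Gal(K̄/L)`, acting on points
via `act`. -/
def arbGal {K : Type*} [Field K] {Pts : Type*}
    (act : (Kbar K ≃ₐ[K] Kbar K) → Pts → Pts) (L : IntermediateField K (Kbar K))
    (φ : Pts → Pts) (α : Pts) : Set (∀ n, Equiv.Perm (preV φ α n)) :=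
  {g | ∃ σ : Kbar K ≃ₐ[K] Kbar K, (∀ x ∈ L, σ x = x) ∧
    ∀ (n : ℕ) (β : preV φ α n), (g n β : Pts) = act σ (β : Pts)}

end
noncomputable section

/-- A complete nonsingular curve `X` over the number field `K`, presented through its
set of `K̄`-points: the natural action of `Gal(K̄/K)` on `X(K̄)`, and the field of
definition `K(P)` of each point, characterized by the property that an automorphism
of `K̄/K` fixes `P` if and only if it fixes `K(P)` pointwise. -/
structure CurveOverK (K : Type*) [Field K] [NumberField K] where
  Pts : Type*
  genus : ℕ
  act : (Kbar K ≃ₐ[K] Kbar K) →* Equiv.Perm Pts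
  fod : Pts → IntermediateField K (Kbar K)
  fod_fin : ∀ P : Pts, FiniteDimensional K (fod P)
  fod_spec : ∀ (σ : Kbar K ≃ₐ[K] Kbar K) (P : Pts), act σ P = P ↔ ∀ x ∈ fod P, σ x = x

/-- A morphism `f : X → X` of degree `d` defined over `K`, presented through its action
on `X(K̄)`: it commutes with the Galois action, and each fiber is finite and nonempty
with at most `d` points. -/
structure CurveMor {K : Type*} [Field K] [NumberField K] (X : CurveOverK K) (d : ℕ) where
  toFun : X.Pts → X.Pts
  equivariant : ∀ (σ : Kbar K ≃ₐ[K] Kbar K) (P : X.Pts),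
    toFun (X.act σ P) = X.act σ (toFun P)
  fiber_lb : ∀ P : X.Pts, 1 ≤ Nat.card {Q : X.Pts // toFun Q = P}
  fiber_ub : ∀ P : X.Pts, Nat.card {Q : X.Pts // toFun Q = P} ≤ d

/-- The field `K(f^{-n}(α))` generated over `K` by the `n`-th preimages of `α`. -/
def levelField {K : Type*} [Field K] [NumberField K] (X : CurveOverK K)
    (f : X.Pts → X.Pts) (α : X.Pts) (n : ℕ) : IntermediateField K (Kbar K) :=
  ⨆ β : preV f α n, X.fod (β : X.Pts)

end

/-!
A ball of radius `ε_n = d!^{-(dⁿ-1)/(d-1)}` consists of the automorphisms agreeing with its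
centre on the height-`n` subtree, so `N_{ε_n}(G) = |r_n(G)|`. For the Galois image, the
restriction to the height-`n` subtree is determined by the action on `f^{-n}(α)`, because every
lower vertex is an image of a top one, and the kernel of that action is `Gal(K̄/K(f^{-n}(α)))`;
hence `|r_n(G)| = [K(f^{-n}(α)) : K]`. As `log (1/ε_n) = dⁿ (1 - d^{-n}) log d! / (d - 1)`, the
Minkowski ratio at scale `ε_n` is `log [K(f^{-n}(α)) : K] / dⁿ` times a factor tending to
`(d - 1) / log d!`. Each vertex has at most `d` children, which gives
`[K(f^{-n}(α)) : K] ≤ d^{2dⁿ}`; so the sequence is bounded and the factor passes through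
`liminf` and `limsup`.
-/

open Filter Topology

section TreeMetric

variable {V : ℕ → Type*} {d : ℕ}

theorem treeScale_pos (n : ℕ) : 0 < treeScale d n := by
  unfold treeScale
  positivity

theorem treeScale_strictAnti (hd : 2 ≤ d) : StrictAnti (treeScale d) := by
  intro m n hmn
  have hfac : (1 : ℝ) < d.factorial := by
    exact_mod_cast (Nat.one_lt_two.trans_le hd).trans_le (Nat.self_le_factorial d)
  have hexp : scaleExp d m < scaleExp d n :=
    Finset.sum_lt_sum_of_subset (Finset.range_subset_range.2 hmn.le) (i := m)
      (by simp [hmn]) (by simp) (by positivity) (fun _ _ _ => by positivity)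
  exact inv_strictAnti₀ (by positivity) (pow_lt_pow_right₀ hfac hexp)

theorem log_inv_treeScale (hd : d ≠ 1) (n : ℕ) :
    Real.log (1 / treeScale d n) =
      ((d : ℝ) ^ n - 1) / ((d : ℝ) - 1) * Real.log (d.factorial : ℝ) := by
  have hsum : (scaleExp d n : ℝ) = ((d : ℝ) ^ n - 1) / ((d : ℝ) - 1) := by
    rw [scaleExp, Nat.cast_sum, ← geom_sum_eq (by exact_mod_cast hd)]
    push_cast
    rfl
  rw [treeScale, one_div, inv_inv, Real.log_pow, hsum]

theorem agreeUpTo_zero [Subsingleton (V 0)] (σ τ : ∀ k, Equiv.Perm (V k)) :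
    AgreeUpTo 0 σ τ := by
  intro k hk
  obtain rfl := Nat.le_zero.1 hk
  exact Subsingleton.elim _ _

theorem AgreeUpTo.mono {m n : ℕ} {σ τ : ∀ k, Equiv.Perm (V k)} (h : AgreeUpTo n σ τ)
    (hmn : m ≤ n) : AgreeUpTo m σ τ :=
  fun k hk => h k (hk.trans hmn)

theorem treeDist_le_treeScale_iff (hd : 2 ≤ d) [Subsingleton (V 0)]
    (σ τ : ∀ k, Equiv.Perm (V k)) (n : ℕ) :
    treeDist d σ τ ≤ treeScale d n ↔ AgreeUpTo n σ τ := by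
  refine ⟨fun h => ?_, fun h => csInf_le ⟨0, ?_⟩ ⟨n, h, rfl⟩⟩
  · by_contra hn
    obtain ⟨k, rfl⟩ : ∃ k, n = k + 1 :=
      Nat.exists_eq_succ_of_ne_zero fun h0 => hn (h0 ▸ agreeUpTo_zero σ τ)
    have hk : treeScale d k ≤ treeDist d σ τ := by
      refine le_csInf ⟨_, 0, agreeUpTo_zero σ τ, rfl⟩ ?_
      rintro _ ⟨m, hm, rfl⟩
      exact (treeScale_strictAnti hd).antitone (not_lt.1 fun hkm => hn (hm.mono hkm))
    exact (h.trans_lt (treeScale_strictAnti hd k.lt_succ_self)).not_ge hk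
  · rintro _ ⟨m, -, rfl⟩
    exact (treeScale_pos m).le

theorem agreeUpTo_iff_restrict_eq {n : ℕ} {σ τ : ∀ k, Equiv.Perm (V k)} :
    AgreeUpTo n σ τ ↔ (fun k : Fin (n + 1) => σ k.1) = fun k : Fin (n + 1) => τ k.1 :=
  ⟨fun h => funext fun k => h k.1 (Nat.lt_succ_iff.1 k.2),
    fun h k hk => congrFun h ⟨k, Nat.lt_succ_of_le hk⟩⟩

theorem coverNum_eq_levelCard (hd : 2 ≤ d) [Subsingleton (V 0)] [∀ k, Finite (V k)]
    (G : Set (∀ k, Equiv.Perm (V k))) (n : ℕ) : coverNum d G n = levelCard G n := by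
  set r := fun (σ : ∀ k, Equiv.Perm (V k)) (k : Fin (n + 1)) => σ k.1
  have hball : ∀ σ τ, treeDist d σ τ ≤ treeScale d n ↔ r σ = r τ := fun σ τ =>
    (treeDist_le_treeScale_iff hd σ τ n).trans agreeUpTo_iff_restrict_eq
  have hfin : (r '' G).Finite := Set.toFinite _
  -- a section of `r` over `r '' G` is a cover of minimal size
  set s := hfin.toFinset.image (Function.invFunOn r G)
  have hcover : G ⊆ ⋃ σ ∈ s, {τ | treeDist d σ τ ≤ treeScale d n} := by
    intro τ hτ
    have ht : r τ ∈ r '' G := ⟨τ, hτ, rfl⟩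
    simp only [Set.mem_iUnion]
    exact ⟨_, Finset.mem_image_of_mem _ (hfin.mem_toFinset.2 ht),
      (hball _ _).2 (Function.invFunOn_eq ht)⟩
  unfold coverNum
  refine le_antisymm (le_trans (Nat.sInf_le ⟨s, rfl, hcover⟩) ?_)
    (le_csInf ⟨_, s, rfl, hcover⟩ ?_)
  · calc s.card ≤ hfin.toFinset.card := Finset.card_image_le
      _ = levelCard G n := by
        rw [levelCard, Nat.card_coe_set_eq, Set.ncard_eq_toFinset_card _ hfin]
  · rintro _ ⟨t, rfl, ht⟩
    have hsub : r '' G ⊆ r '' t := by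
      rintro _ ⟨τ, hτ, rfl⟩
      obtain ⟨σ, hσ, hστ⟩ := by simpa only [Set.mem_iUnion] using ht hτ
      exact ⟨σ, hσ, (hball σ τ).1 hστ⟩
    calc levelCard G n ≤ (r '' t).ncard := Set.ncard_le_ncard hsub (Set.toFinite _)
      _ ≤ (t : Set (∀ k, Equiv.Perm (V k))).ncard := Set.ncard_image_le (Set.toFinite _)
      _ = t.card := Set.ncard_coe_finset t

theorem log_coverNum_div_log_inv_treeScale (hd : 2 ≤ d)
    [Subsingleton (V 0)] [∀ k, Finite (V k)] (G : Set (∀ k, Equiv.Perm (V k))) (n : ℕ) :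
    Real.log (coverNum d G n) / Real.log (1 / treeScale d n) =
      ((d : ℝ) - 1) / Real.log (d.factorial : ℝ) * (1 - ((d : ℝ) ^ n)⁻¹)⁻¹ *
        (Real.log (levelCard G n) / (d : ℝ) ^ n) := by
  rw [coverNum_eq_levelCard hd, log_inv_treeScale (by omega), mul_assoc]
  have hpow : (d : ℝ) ^ n ≠ 0 := pow_ne_zero _ (by positivity)
  rw [← div_eq_inv_mul, div_div, mul_sub, mul_one, mul_inv_cancel₀ hpow]
  generalize (d : ℝ) ^ n - 1 = D
  simp only [div_eq_mul_inv, mul_inv, inv_inv]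
  ring

end TreeMetric

section Counting

theorem Function.FactorsThrough.natCard_range_le {Γ α β : Type*} {F : Γ → α} {H : Γ → β}
    (h : F.FactorsThrough H) [Finite (Set.range H)] :
    Nat.card (Set.range F) ≤ Nat.card (Set.range H) := by
  refine Nat.card_le_card_of_injective (fun y => ⟨H y.2.choose, _, rfl⟩) fun y y' hyy' => ?_
  rw [← Subtype.coe_inj, ← y.2.choose_spec, ← y'.2.choose_spec]
  exact h (congrArg Subtype.val hyy')

theorem exists_injective_prod_fin {A B : Type*} {d : ℕ} (p : A → B)
    (hp : ∀ b, Nonempty ({a // p a = b} ↪ Fin d)) :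
    ∃ c : A → Fin d, Function.Injective fun a => (p a, c a) := by
  let e := fun b => (hp b).some
  let e' : (Σ b, {a // p a = b}) → B × Fin d := fun x => (x.1, e x.1 x.2)
  have he' : Function.Injective e' := by
    rintro ⟨b, x⟩ ⟨b', x'⟩ h
    simp only [e', Prod.mk.injEq] at h
    obtain ⟨rfl, hx⟩ := h
    rw [(e b).injective hx]
  refine ⟨fun a => e (p a) ⟨a, rfl⟩, ?_⟩
  exact he'.comp (Equiv.sigmaFiberEquiv p).symm.injective

/-- A permutation `π` of `A` lying over a known permutation of `B` is determined by the
fibrewise positions `c ∘ π`, which take at most `d ^ |A|` values. -/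
theorem natCard_range_le_of_semiconj {Γ A B : Type*} [Finite B] {d : ℕ} (p : A → B)
    (hp : ∀ b, Nonempty ({a // p a = b} ↪ Fin d)) (F : Γ → Equiv.Perm A)
    (E : Γ → Equiv.Perm B) (hFE : ∀ γ a, p (F γ a) = E γ (p a)) :
    Nat.card (Set.range F) ≤ Nat.card (Set.range E) * d ^ Nat.card A := by
  obtain ⟨c, hc⟩ := exists_injective_prod_fin p hp
  have : Finite A := Finite.of_injective _ hc
  let H : Γ → Set.range E × (A → Fin d) := fun γ => (⟨E γ, γ, rfl⟩, c ∘ F γ)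
  have hFH : F.FactorsThrough H := by
    intro γ γ' h
    obtain ⟨hE, hF⟩ := Prod.ext_iff.1 h
    ext a
    refine @hc (F γ a) (F γ' a) (Prod.ext ?_ (congrFun hF a))
    show p (F γ a) = p (F γ' a)
    rw [hFE, hFE, show E γ = E γ' from congrArg Subtype.val hE]
  calc Nat.card (Set.range F) ≤ Nat.card (Set.range H) := hFH.natCard_range_le
    _ ≤ Nat.card (Set.range E × (A → Fin d)) :=
      Nat.card_le_card_of_injective _ Subtype.val_injective
    _ = Nat.card (Set.range E) * d ^ Nat.card A := by
      rw [Nat.card_prod, Nat.card_fun, Nat.card_fin]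

end Counting

section LiminfLimsup

variable {ι : Type*} {l : Filter ι} [l.NeBot] {u v : ι → ℝ} {c : ℝ}

theorem Filter.Tendsto.liminf_mul_eq (hu : Tendsto u l (𝓝 c)) (hu0 : 0 ≤ᶠ[l] u)
    (hv0 : 0 ≤ᶠ[l] v) (hv : IsBoundedUnder (· ≤ ·) l v) :
    liminf (u * v) l = c * liminf v l := by
  have hbdd : IsBoundedUnder (· ≤ ·) l u := hu.isBoundedUnder_le
  apply le_antisymm
  · simpa only [hu.limsup_eq] using liminf_mul_le hu0 hbdd hv0 hv.isCoboundedUnder_ge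
  · simpa only [hu.liminf_eq] using le_liminf_mul hu0 hbdd hv0 hv.isCoboundedUnder_ge

theorem Filter.Tendsto.limsup_mul_eq (hu : Tendsto u l (𝓝 c)) (hu0 : 0 ≤ᶠ[l] u)
    (hv0 : 0 ≤ᶠ[l] v) (hv : IsBoundedUnder (· ≤ ·) l v) :
    limsup (u * v) l = c * limsup v l := by
  have hbdd : IsBoundedUnder (· ≤ ·) l u := hu.isBoundedUnder_le
  rw [mul_comm u, mul_comm c]
  apply le_antisymm
  · simpa only [hu.limsup_eq] using limsup_mul_le hv0.frequently hv hu0 hbdd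
  · simpa only [hu.liminf_eq] using le_limsup_mul hv0.frequently hv hu0 hbdd

theorem tendsto_one_sub_inv_pow_inv {x : ℝ} (hx : 1 < x) :
    Tendsto (fun n : ℕ => (1 - (x ^ n)⁻¹)⁻¹) atTop (𝓝 1) := by
  have h := tendsto_inv_atTop_zero.comp (tendsto_pow_atTop_atTop_of_one_lt hx)
  simpa using (tendsto_const_nhds.sub h).inv₀ (by norm_num : (1 : ℝ) - 0 ≠ 0)

end LiminfLimsup

theorem IntermediateField.mem_fixingSubgroup_iSup {F L ι : Type*} [Field F] [Field L]
    [Algebra F L] (E : ι → IntermediateField F L) (σ : L ≃ₐ[F] L) :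
    σ ∈ (⨆ i, E i).fixingSubgroup ↔ ∀ i, σ ∈ (E i).fixingSubgroup := by
  simp only [← Subgroup.zpowers_le, ← IntermediateField.le_iff_le, iSup_le_iff]

section PreimageTree

variable {Pts : Type*} (φ : Pts → Pts) (α : Pts)

instance preV.subsingleton_zero : Subsingleton (preV φ α 0) :=
  ⟨fun β γ => Subtype.ext (β.2.trans γ.2.symm)⟩

def preParentFiberEmbedding (n : ℕ) (β : preV φ α n) :
    {γ // preParent φ α n γ = β} ↪ {Q // φ Q = β.1} :=
  ⟨fun γ => ⟨γ.1.1, congrArg Subtype.val γ.2⟩,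
    fun _ _ h => by simpa only [Subtype.ext_iff] using h⟩

end PreimageTree

theorem CurveOverK.act_eq_self_of_fod_eq_bot {K : Type*} [Field K] [NumberField K]
    (X : CurveOverK K) {P : X.Pts} (hP : X.fod P = ⊥) (σ : Kbar K ≃ₐ[K] Kbar K) :
    X.act σ P = P := by
  rw [X.fod_spec, hP]
  intro x hx
  obtain ⟨k, rfl⟩ := IntermediateField.mem_bot.1 hx
  exact σ.commutes k

namespace CurveMor

variable {K : Type*} [Field K] [NumberField K] {X : CurveOverK K} {d : ℕ} (f : CurveMor X d)

theorem nonempty_fiber_embedding (P : X.Pts) :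
    Nonempty ({Q // f.toFun Q = P} ↪ Fin d) := by
  have := (Nat.card_pos_iff.1 (f.fiber_lb P)).2
  have := Fintype.ofFinite {Q // f.toFun Q = P}
  refine Function.Embedding.nonempty_of_card_le ?_
  simpa [Nat.card_eq_fintype_card] using f.fiber_ub P

theorem surjective : Function.Surjective f.toFun := fun P =>
  let ⟨Q⟩ := (Nat.card_pos_iff.1 (f.fiber_lb P)).1
  ⟨Q.1, Q.2⟩

theorem iterate_act (σ : Kbar K ≃ₐ[K] Kbar K) (n : ℕ) (P : X.Pts) :
    f.toFun^[n] (X.act σ P) = X.act σ (f.toFun^[n] P) :=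
  Function.Commute.iterate_left (f.equivariant σ) n P

theorem nonempty_preParent_fiber_embedding (α : X.Pts) (n : ℕ) (β : preV f.toFun α n) :
    Nonempty ({γ // preParent f.toFun α n γ = β} ↪ Fin d) :=
  (f.nonempty_fiber_embedding β.1).map (preParentFiberEmbedding f.toFun α n β).trans

theorem exists_preParent_injective (α : X.Pts) (n : ℕ) :
    ∃ c : preV f.toFun α (n + 1) → Fin d,
      Function.Injective fun γ => (preParent f.toFun α n γ, c γ) :=
  exists_injective_prod_fin _ (f.nonempty_preParent_fiber_embedding α n)

instance finite_preV (α : X.Pts) : ∀ n, Finite (preV f.toFun α n)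
  | 0 => Finite.of_subsingleton
  | n + 1 =>
    have := finite_preV α n
    Finite.of_injective _ (f.exists_preParent_injective α n).choose_spec

instance finiteDimensional_levelField (α : X.Pts) (n : ℕ) :
    FiniteDimensional K (levelField X f.toFun α n) :=
  have := X.fod_fin
  IntermediateField.finiteDimensional_iSup_of_finite

theorem natCard_preV_le (α : X.Pts) (n : ℕ) : Nat.card (preV f.toFun α n) ≤ d ^ n := by
  induction n with
  | zero => simp
  | succ n ih =>
    calc Nat.card (preV f.toFun α (n + 1))
        ≤ Nat.card (preV f.toFun α n × Fin d) :=
          Nat.card_le_card_of_injective _ (f.exists_preParent_injective α n).choose_spec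
      _ ≤ d ^ n * d := by rw [Nat.card_prod, Nat.card_fin]; gcongr
      _ = d ^ (n + 1) := (pow_succ d n).symm

variable {α : X.Pts}

noncomputable def levelAction (hα : X.fod α = ⊥) (n : ℕ) :
    (Kbar K ≃ₐ[K] Kbar K) →* Equiv.Perm (preV f.toFun α n) where
  toFun σ := (X.act σ).subtypePerm fun P => by
    rw [f.iterate_act]
    nth_rewrite 1 [← X.act_eq_self_of_fod_eq_bot hα σ]
    exact (X.act σ).apply_eq_iff_eq
  map_one' := by ext; simp
  map_mul' σ τ := by
    ext
    simp only [map_mul, Equiv.Perm.coe_mul, Equiv.Perm.subtypePerm_apply, Function.comp_apply]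

theorem arbGal_eq_range (hα : X.fod α = ⊥) :
    arbGal (fun σ => ⇑(X.act σ)) ⊥ f.toFun α =
      Set.range fun σ n => levelAction f hα n σ := by
  ext g
  constructor
  · rintro ⟨σ, -, hg⟩
    exact ⟨σ, funext fun n => Equiv.ext fun β => Subtype.ext (hg n β).symm⟩
  · rintro ⟨σ, rfl⟩
    refine ⟨σ, fun x hx => ?_, fun n β => rfl⟩
    obtain ⟨k, rfl⟩ := IntermediateField.mem_bot.1 hx
    exact σ.commutes k

theorem mem_ker_levelAction (hα : X.fod α = ⊥) {n : ℕ} {σ : Kbar K ≃ₐ[K] Kbar K} :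
    σ ∈ (levelAction f hα n).ker ↔ ∀ β : preV f.toFun α n, X.act σ β = β := by
  simp [MonoidHom.mem_ker, Equiv.ext_iff, levelAction, Subtype.ext_iff]

theorem ker_levelAction (hα : X.fod α = ⊥) (n : ℕ) :
    (levelAction f hα n).ker = (levelField X f.toFun α n).fixingSubgroup := by
  ext σ
  rw [f.mem_ker_levelAction hα, levelField, IntermediateField.mem_fixingSubgroup_iSup]
  simp only [IntermediateField.mem_fixingSubgroup_iff, X.fod_spec]

/-- Every point of level `k ≤ n` is the image of a point of level `n`, since `f` is onto. -/
theorem ker_levelAction_antitone (hα : X.fod α = ⊥) {k n : ℕ} (hkn : k ≤ n) :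
    (levelAction f hα n).ker ≤ (levelAction f hα k).ker := by
  intro σ hσ
  rw [f.mem_ker_levelAction hα] at hσ ⊢
  intro β
  obtain ⟨γ, hγ⟩ := f.surjective.iterate (n - k) β.1
  have hγn : f.toFun^[n] γ = α := by
    rw [← Nat.add_sub_cancel' hkn, Function.iterate_add_apply, hγ, β.2]
  rw [← hγ, ← f.iterate_act, hσ ⟨γ, hγn⟩]

theorem natCard_range_levelAction (hα : X.fod α = ⊥) (n : ℕ) :
    Nat.card (Set.range (levelAction f hα n)) = Module.finrank K (levelField X f.toFun α n) := by
  rw [IntermediateField.finrank_eq_fixingSubgroup_index, ← f.ker_levelAction hα,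
    Subgroup.index_ker]
  rfl

theorem levelCard_arbGal (hα : X.fod α = ⊥) (n : ℕ) :
    levelCard (arbGal (fun σ => ⇑(X.act σ)) ⊥ f.toFun α) n =
      Module.finrank K (levelField X f.toFun α n) := by
  rw [levelCard, f.arbGal_eq_range hα, ← Set.range_comp, ← f.natCard_range_levelAction hα]
  apply le_antisymm <;> apply Function.FactorsThrough.natCard_range_le
  · intro σ τ h
    funext k
    exact (MonoidHom.eq_iff _).2
      (f.ker_levelAction_antitone hα (Nat.lt_succ_iff.1 k.2) ((MonoidHom.eq_iff _).1 h))
  · intro σ τ h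
    exact congrFun h ⟨n, n.lt_succ_self⟩

theorem natCard_range_levelAction_succ_le (hα : X.fod α = ⊥) (hd : 1 ≤ d) (n : ℕ) :
    Nat.card (Set.range (f.levelAction hα (n + 1))) ≤
      Nat.card (Set.range (f.levelAction hα n)) * d ^ d ^ (n + 1) := by
  refine (natCard_range_le_of_semiconj (preParent f.toFun α n)
    (f.nonempty_preParent_fiber_embedding α n)
    (f.levelAction hα (n + 1)) (f.levelAction hα n)
    fun σ γ => Subtype.ext (f.equivariant σ γ.1)).trans ?_
  gcongr
  exact f.natCard_preV_le α (n + 1)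

theorem finrank_levelField_le (hα : X.fod α = ⊥) (hd : 2 ≤ d) (n : ℕ) :
    Module.finrank K (levelField X f.toFun α n) ≤ d ^ (2 * d ^ n) := by
  rw [← f.natCard_range_levelAction hα]
  induction n with
  | zero =>
    calc Nat.card (Set.range (f.levelAction hα 0)) ≤ 1 :=
          Finite.card_le_one_iff_subsingleton.2 inferInstance
      _ ≤ d ^ (2 * d ^ 0) := Nat.one_le_pow _ _ (by omega)
  | succ n ih =>
    calc _ ≤ d ^ (2 * d ^ n) * d ^ d ^ (n + 1) :=
          (f.natCard_range_levelAction_succ_le hα (by omega) n).trans (by gcongr)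
      _ = d ^ (2 * d ^ n + d ^ (n + 1)) := (pow_add _ _ _).symm
      _ ≤ d ^ (2 * d ^ (n + 1)) := by
          gcongr
          · omega
          · rw [pow_succ]
            have := Nat.mul_le_mul_left (d ^ n) hd
            omega

theorem log_finrank_levelField_div_pow_nonneg (n : ℕ) :
    0 ≤ Real.log (Module.finrank K (levelField X f.toFun α n) : ℝ) / (d : ℝ) ^ n :=
  div_nonneg (Real.log_natCast_nonneg _) (by positivity)

theorem log_finrank_levelField_div_pow_le (hα : X.fod α = ⊥) (hd : 2 ≤ d) (n : ℕ) :
    Real.log (Module.finrank K (levelField X f.toFun α n) : ℝ) / (d : ℝ) ^ n ≤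
      2 * Real.log d := by
  rw [div_le_iff₀ (by positivity)]
  calc Real.log (Module.finrank K (levelField X f.toFun α n) : ℝ)
      ≤ Real.log ((d : ℝ) ^ (2 * d ^ n)) :=
        Real.log_le_log (by exact_mod_cast Module.finrank_pos)
          (by exact_mod_cast f.finrank_levelField_le hα hd n)
    _ = 2 * Real.log d * (d : ℝ) ^ n := by rw [Real.log_pow]; push_cast; ring

end CurveMor

theorem arboreal_curve_dim_formula_general {K : Type*} [Field K] [NumberField K] {d : ℕ}
    (hd : 2 ≤ d) (X : CurveOverK K)
    (f : CurveMor X d) (α : X.Pts) (hα : X.fod α = ⊥) :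
    dimLower d (arbGal (K := K) (fun σ => ⇑(X.act σ)) ⊥ f.toFun α) =
        ((d : ℝ) - 1) / Real.log (d.factorial : ℝ) *
          Filter.liminf (fun n : ℕ =>
            Real.log (Module.finrank K (levelField X f.toFun α n) : ℝ) / (d : ℝ) ^ n)
            Filter.atTop ∧
      dimUpper d (arbGal (K := K) (fun σ => ⇑(X.act σ)) ⊥ f.toFun α) =
        ((d : ℝ) - 1) / Real.log (d.factorial : ℝ) *
          Filter.limsup (fun n : ℕ =>
            Real.log (Module.finrank K (levelField X f.toFun α n) : ℝ) / (d : ℝ) ^ n)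
            Filter.atTop ∧
      ∀ L : ℝ, Filter.Tendsto (fun n : ℕ =>
            Real.log (Module.finrank K (levelField X f.toFun α n) : ℝ) / (d : ℝ) ^ n)
            Filter.atTop (nhds L) →
        HasDim d (arbGal (K := K) (fun σ => ⇑(X.act σ)) ⊥ f.toFun α)
          (((d : ℝ) - 1) / Real.log (d.factorial : ℝ) * L) := by
  set G := arbGal (K := K) (fun σ => ⇑(X.act σ)) ⊥ f.toFun α
  set b : ℕ → ℝ := fun n =>
    Real.log (Module.finrank K (levelField X f.toFun α n) : ℝ) / (d : ℝ) ^ n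
  set c : ℝ := ((d : ℝ) - 1) / Real.log (d.factorial : ℝ)
  set w : ℕ → ℝ := fun n => c * (1 - ((d : ℝ) ^ n)⁻¹)⁻¹
  have hd1 : (1 : ℝ) < d := by exact_mod_cast hd
  have hratio : (fun n => Real.log (coverNum d G n) / Real.log (1 / treeScale d n)) = w * b := by
    funext n
    rw [log_coverNum_div_log_inv_treeScale hd, f.levelCard_arbGal hα]
    rfl
  have hw : Tendsto w atTop (𝓝 c) := by
    simpa using (tendsto_one_sub_inv_pow_inv hd1).const_mul c
  have hw0 : 0 ≤ᶠ[atTop] w := .of_forall fun n =>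
    mul_nonneg (div_nonneg (by linarith) (Real.log_natCast_nonneg _))
      (inv_nonneg.2 (sub_nonneg.2 (inv_le_one_of_one_le₀ (one_le_pow₀ hd1.le))))
  have hb0 : 0 ≤ᶠ[atTop] b := .of_forall f.log_finrank_levelField_div_pow_nonneg
  have hb : IsBoundedUnder (· ≤ ·) atTop b :=
    isBoundedUnder_of ⟨_, f.log_finrank_levelField_div_pow_le hα hd⟩
  have hlow : dimLower d G = c * liminf b atTop := by
    rw [dimLower, hratio]
    exact hw.liminf_mul_eq hw0 hb0 hb
  have hup : dimUpper d G = c * limsup b atTop := by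
    rw [dimUpper, hratio]
    exact hw.limsup_mul_eq hw0 hb0 hb
  exact ⟨hlow, hup, fun L hL => ⟨by rw [hlow, hL.liminf_eq], by rw [hup, hL.limsup_eq]⟩⟩

theorem arboreal_curve_dim_formula {K : Type*} [Field K] [NumberField K] {d : ℕ}
    (hd : 2 ≤ d) (X : CurveOverK K) (hgenus : X.genus = 0 ∨ X.genus = 1)
    (f : CurveMor X d) (α : X.Pts) (hα : X.fod α = ⊥) :
    dimLower d (arbGal (K := K) (fun σ => ⇑(X.act σ)) ⊥ f.toFun α) =
        ((d : ℝ) - 1) / Real.log (d.factorial : ℝ) *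
          Filter.liminf (fun n : ℕ =>
            Real.log (Module.finrank K (levelField X f.toFun α n) : ℝ) / (d : ℝ) ^ n)
            Filter.atTop ∧
      dimUpper d (arbGal (K := K) (fun σ => ⇑(X.act σ)) ⊥ f.toFun α) =
        ((d : ℝ) - 1) / Real.log (d.factorial : ℝ) *
          Filter.limsup (fun n : ℕ =>
            Real.log (Module.finrank K (levelField X f.toFun α n) : ℝ) / (d : ℝ) ^ n)
            Filter.atTop ∧
      ∀ L : ℝ, Filter.Tendsto (fun n : ℕ =>
            Real.log (Module.finrank K (levelField X f.toFun α n) : ℝ) / (d : ℝ) ^ n)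
            Filter.atTop (nhds L) →
        HasDim d (arbGal (K := K) (fun σ => ⇑(X.act σ)) ⊥ f.toFun α)
          (((d : ℝ) - 1) / Real.log (d.factorial : ℝ) * L) :=
  arboreal_curve_dim_formula_general hd X f α hα
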